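/- arXiv:1602.08043 — 4 statements merged into one kernel-verified Lean document; each statement's English description precedes it below -/
import Mathlib

section
/- Entropy bound for Wasserstein distance of lifted measures: Let P be a probability measure on a Polish space E, S, S_m : E → E' measurable maps into a Polish metric space (E', d'), and suppose E_P[exp(k · d'(S_m(X), S(X)))] ≤ 1 + C for some k > 0 and C < ∞. Then for every probability measure Q ≪ P with H(Q|P) ≤ a, the 1-Wasserstein distance between Q∘S_m⁻¹ and Q∘S⁻¹ satisfies d_W(Q∘S_m⁻¹, Q∘S⁻¹) ≤ (4/k)(2 + a)(1 + C). -/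
open MeasureTheory
open scoped ENNReal NNReal Classical

/-- The 1-Wasserstein distance between two measures on a metric space. -/
noncomputable def wasserstein {E : Type*} [MetricSpace E] [MeasurableSpace E]
    (μ ν : Measure E) : ℝ≥0∞ :=
  ⨅ (π : Measure (E × E)) (_ : π.map Prod.fst = μ ∧ π.map Prod.snd = ν),
    ∫⁻ p, edist p.1 p.2 ∂π

/-- The relative entropy `H(Q|P) = ∫ log (dQ/dP) dQ` if `Q ≪ P` and the log-likelihood ratio
is integrable, and `+∞` otherwise. -/
noncomputable def relEntropy {E : Type*} [MeasurableSpace E] (Q P : Measure E) : ℝ≥0∞ :=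
  if Q ≪ P ∧ Integrable (llr Q P) Q then ENNReal.ofReal (∫ x, llr Q P x ∂Q) else ⊤

/-!
The coupling `x ↦ (S_m x, S x)` of `Q ∘ S_m⁻¹` and `Q ∘ S⁻¹` bounds the Wasserstein distance by
`E_Q[d'(S_m, S)]`. Integrating Young's inequality `u v ≤ eᵘ + v log v - v` with
`u = k d'(S_m, S)`, `v = dQ/dP` against `P` gives
`k E_Q[d'(S_m, S)] ≤ E_P[e^{k d'(S_m, S)}] - 1 + H(Q|P) ≤ C + a`, stronger than the claimed bound.
-/

open Real

lemma Real.mul_le_exp_add_mul_log_sub (u : ℝ) {v : ℝ} (hv : 0 ≤ v) :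
    u * v ≤ exp u + v * log v - v := by
  rcases hv.eq_or_lt with rfl | hv
  · simp [(exp_pos u).le]
  · have key : v * (u - log v + 1) ≤ v * exp (u - log v) :=
      mul_le_mul_of_nonneg_left (add_one_le_exp _) hv.le
    rw [exp_sub, exp_log hv, mul_div_cancel₀ _ hv.ne'] at key
    linarith

lemma wasserstein_map_le_lintegral_edist {α E : Type*} [MeasurableSpace α] [MetricSpace E]
    [MeasurableSpace E] (μ : Measure α) {f g : α → E} (hf : Measurable f) (hg : Measurable g) :
    wasserstein (μ.map f) (μ.map g) ≤ ∫⁻ x, edist (f x) (g x) ∂μ := by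
  have hfg : Measurable fun x ↦ (f x, g x) := hf.prodMk hg
  have hcoupling : (μ.map fun x ↦ (f x, g x)).map Prod.fst = μ.map f ∧
      (μ.map fun x ↦ (f x, g x)).map Prod.snd = μ.map g := by
    rw [Measure.map_map measurable_fst hfg, Measure.map_map measurable_snd hfg]
    exact ⟨rfl, rfl⟩
  exact (iInf₂_le (μ.map fun x ↦ (f x, g x)) hcoupling).trans (lintegral_map_le _ _)

section RelEntropy

variable {α : Type*} [MeasurableSpace α] {P Q : Measure α}

lemma relEntropy_le_ofReal_iff {a : ℝ} (ha : 0 ≤ a) :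
    relEntropy Q P ≤ ENNReal.ofReal a ↔
      Q ≪ P ∧ Integrable (llr Q P) Q ∧ ∫ x, llr Q P x ∂Q ≤ a := by
  unfold relEntropy
  split_ifs with h
  · rw [ENNReal.ofReal_le_ofReal_iff ha]
    tauto
  · simp only [top_le_iff, ENNReal.ofReal_ne_top, false_iff]
    tauto

variable [SigmaFinite P] {f : α → ℝ}

lemma integrable_exp_add_rnDeriv_mul_log_sub [IsFiniteMeasure Q] (hac : Q ≪ P)
    (hexp : Integrable (fun x ↦ exp (f x)) P) (hllr : Integrable (llr Q P) Q) :
    Integrable (fun x ↦ exp (f x) + (Q.rnDeriv P x).toReal * log (Q.rnDeriv P x).toReal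
      - (Q.rnDeriv P x).toReal) P :=
  (hexp.add ((integrable_rnDeriv_mul_log_iff hac).2 hllr)).sub Measure.integrable_toReal_rnDeriv

lemma integrable_of_integrable_exp_of_integrable_llr [IsFiniteMeasure Q] (hac : Q ≪ P)
    (hf : AEStronglyMeasurable f P) (hf0 : 0 ≤ᵐ[P] f)
    (hexp : Integrable (fun x ↦ exp (f x)) P) (hllr : Integrable (llr Q P) Q) :
    Integrable f Q := by
  refine (integrable_toReal_rnDeriv_mul_iff hac).1 <|
    (integrable_exp_add_rnDeriv_mul_log_sub hac hexp hllr).mono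
      ((Measure.measurable_rnDeriv Q P).ennreal_toReal.aestronglyMeasurable.mul hf) ?_
  filter_upwards [hf0] with x hx
  rw [norm_of_nonneg (mul_nonneg ENNReal.toReal_nonneg hx), mul_comm]
  exact (mul_le_exp_add_mul_log_sub _ ENNReal.toReal_nonneg).trans (le_norm_self _)

lemma integral_le_integral_exp_sub_one_add_integral_llr [IsProbabilityMeasure Q] (hac : Q ≪ P)
    (hf : AEStronglyMeasurable f P) (hf0 : 0 ≤ᵐ[P] f)
    (hexp : Integrable (fun x ↦ exp (f x)) P) (hllr : Integrable (llr Q P) Q) :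
    ∫ x, f x ∂Q ≤ ∫ x, exp (f x) ∂P - 1 + ∫ x, llr Q P x ∂Q := by
  have hfQ := integrable_of_integrable_exp_of_integrable_llr hac hf hf0 hexp hllr
  calc ∫ x, f x ∂Q = ∫ x, (Q.rnDeriv P x).toReal * f x ∂P :=
        (integral_toReal_rnDeriv_mul hac).symm
    _ ≤ ∫ x, (exp (f x) + (Q.rnDeriv P x).toReal * log (Q.rnDeriv P x).toReal
          - (Q.rnDeriv P x).toReal) ∂P := by
        refine integral_mono ((integrable_toReal_rnDeriv_mul_iff hac).2 hfQ)
          (integrable_exp_add_rnDeriv_mul_log_sub hac hexp hllr) fun x ↦ ?_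
        rw [mul_comm]
        exact mul_le_exp_add_mul_log_sub _ ENNReal.toReal_nonneg
    _ = ∫ x, exp (f x) ∂P - 1 + ∫ x, llr Q P x ∂Q := by
        have hlog := (integrable_rnDeriv_mul_log_iff hac).2 hllr
        rw [integral_sub (hexp.fun_add hlog) Measure.integrable_toReal_rnDeriv,
          integral_add hexp hlog, integral_rnDeriv_mul_log hac,
          Measure.integral_toReal_rnDeriv hac, probReal_univ]
        ring

end RelEntropy

lemma integrable_and_integral_le_of_lintegral_ofReal_le {α : Type*} [MeasurableSpace α]
    {μ : Measure α} {f : α → ℝ} (hf : AEStronglyMeasurable f μ) (hf0 : 0 ≤ᵐ[μ] f) {c : ℝ}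
    (hc : 0 ≤ c) (h : ∫⁻ x, ENNReal.ofReal (f x) ∂μ ≤ ENNReal.ofReal c) :
    Integrable f μ ∧ ∫ x, f x ∂μ ≤ c := by
  refine ⟨⟨hf, (hasFiniteIntegral_iff_ofReal hf0).2 (h.trans_lt ENNReal.ofReal_lt_top)⟩, ?_⟩
  rw [integral_eq_lintegral_of_nonneg_ae hf0 hf]
  exact ENNReal.toReal_le_of_le_ofReal hc h

theorem stmt_11_general {E E' : Type*}
    [MeasurableSpace E]
    [MetricSpace E'] [PolishSpace E'] [MeasurableSpace E'] [BorelSpace E']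
    (P Q : Measure E) [IsProbabilityMeasure P] [IsProbabilityMeasure Q]
    (S Sm : E → E') (hS : Measurable S) (hSm : Measurable Sm)
    (k C a : ℝ) (hk : 0 < k) (hC : 0 ≤ C) (ha : 0 ≤ a)
    (hexp : ∫⁻ x, ENNReal.ofReal (Real.exp (k * dist (Sm x) (S x))) ∂P
      ≤ 1 + ENNReal.ofReal C)
    (hent : relEntropy Q P ≤ ENNReal.ofReal a) :
    wasserstein (Q.map Sm) (Q.map S) ≤ ENNReal.ofReal (4 / k * (2 + a) * (1 + C)) := by
  obtain ⟨hac, hllr, hH⟩ := (relEntropy_le_ofReal_iff ha).1 hent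
  have hd : Measurable fun x ↦ k * dist (Sm x) (S x) := (hSm.dist hS).const_mul k
  have hd0 : 0 ≤ᵐ[P] fun x ↦ k * dist (Sm x) (S x) := ae_of_all _ fun x ↦ by positivity
  rw [← ENNReal.ofReal_one, ← ENNReal.ofReal_add zero_le_one hC] at hexp
  obtain ⟨hexp_int, hexp_le⟩ := integrable_and_integral_le_of_lintegral_ofReal_le
    hd.exp.aestronglyMeasurable (ae_of_all _ fun _ ↦ (exp_pos _).le) (by positivity) hexp
  have hmoment : k * ∫ x, dist (Sm x) (S x) ∂Q ≤ C + a := by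
    rw [← integral_const_mul]
    linarith [integral_le_integral_exp_sub_one_add_integral_llr hac hd.aestronglyMeasurable hd0
      hexp_int hllr]
  have hdQ : Integrable (fun x ↦ dist (Sm x) (S x)) Q :=
    (integrable_const_mul_iff (isUnit_iff_ne_zero.2 hk.ne') _).1 <|
      integrable_of_integrable_exp_of_integrable_llr hac hd.aestronglyMeasurable hd0 hexp_int hllr
  calc wasserstein (Q.map Sm) (Q.map S) ≤ ∫⁻ x, edist (Sm x) (S x) ∂Q :=
        wasserstein_map_le_lintegral_edist Q hSm hS
    _ = ENNReal.ofReal (∫ x, dist (Sm x) (S x) ∂Q) := by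
        simp_rw [edist_dist]
        exact (ofReal_integral_eq_lintegral_ofReal hdQ (ae_of_all _ fun _ ↦ dist_nonneg)).symm
    _ ≤ ENNReal.ofReal (4 / k * (2 + a) * (1 + C)) := by
        refine ENNReal.ofReal_le_ofReal ?_
        calc ∫ x, dist (Sm x) (S x) ∂Q ≤ (C + a) / k := by rwa [le_div_iff₀' hk]
          _ ≤ 4 * (2 + a) * (1 + C) / k := by gcongr; nlinarith
          _ = 4 / k * (2 + a) * (1 + C) := by ring

/-- **Entropy bound for the Wasserstein distance of lifted measures.** If
`E_P[exp(k d'(S_m(X), S(X)))] ≤ 1 + C`, then for every probability measure `Q ≪ P` with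
`H(Q|P) ≤ a` one has `d_W(Q ∘ S_m⁻¹, Q ∘ S⁻¹) ≤ (4/k)(2 + a)(1 + C)`. -/
theorem stmt_11 {E E' : Type*}
    [MeasurableSpace E] [TopologicalSpace E] [PolishSpace E] [BorelSpace E]
    [MetricSpace E'] [PolishSpace E'] [MeasurableSpace E'] [BorelSpace E']
    (P Q : Measure E) [IsProbabilityMeasure P] [IsProbabilityMeasure Q]
    (S Sm : E → E') (hS : Measurable S) (hSm : Measurable Sm)
    (k C a : ℝ) (hk : 0 < k) (hC : 0 ≤ C) (ha : 0 ≤ a)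
    (hexp : ∫⁻ x, ENNReal.ofReal (Real.exp (k * dist (Sm x) (S x))) ∂P
      ≤ 1 + ENNReal.ofReal C)
    (hac : Q ≪ P) (hent : relEntropy Q P ≤ ENNReal.ofReal a) :
    wasserstein (Q.map Sm) (Q.map S) ≤ ENNReal.ofReal (4 / k * (2 + a) * (1 + C)) :=
  stmt_11_general P Q S Sm hS hSm k C a hk hC ha hexp hent
end

section
/- Hoeffding decomposition identity: for any function H : {1,...,n}² → ℝ and n ≥ 2, (1/(n(n-1))) Σ_{i≠j} H(i,j) = (1/n!) Σ_{σ ∈ S_n} (1/⌊n/2⌋) Σ_{i=1}^{⌊n/2⌋} H(σ(2i-1), σ(2i)), where S_n is the symmetric group on {1,...,n}. -/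
/-!
The symmetric group acts 2-transitively on `{1, …, n}`, so `∑ σ, H (σ a) (σ b)` is the same number
`T` for every ordered pair `a ≠ b`. Summing this over all `n (n - 1)` such pairs and exchanging the
sums, each permutation merely reindexes the off-diagonal pairs, which gives
`n (n - 1) T = n! ∑_{i ≠ j} H i j`. On the right-hand side each of the `⌊n/2⌋` blocks
`(2i - 1, 2i)` contributes exactly `T`.
-/

open Finset

theorem Finset.sum_offDiag_eq_sum_sum_ite {α M : Type*} [Fintype α] [DecidableEq α]
    [AddCommMonoid M] (f : α → α → M) :
    ∑ p ∈ univ.offDiag, f p.1 p.2 = ∑ i, ∑ j, if i ≠ j then f i j else 0 := by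
  rw [← sum_product', ← sum_filter]
  exact sum_congr (by ext; simp) fun _ _ => rfl

namespace Equiv.Perm

variable {α M : Type*} [DecidableEq α] [Fintype α]

theorem sum_apply_apply_eq_of_ne [AddCommMonoid M] (f : α → α → M) {a b c d : α} (hab : a ≠ b)
    (hcd : c ≠ d) : ∑ σ : Perm α, f (σ a) (σ b) = ∑ σ : Perm α, f (σ c) (σ d) := by
  obtain ⟨τ, hτa, hτb⟩ :=
    MulAction.is_two_pretransitive_iff.mp (isMultiplyPretransitive α 2) hab hcd
  refine (Fintype.sum_equiv (Equiv.mulRight τ) _ _ fun σ => ?_).symm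
  rw [← hτa, ← hτb]
  rfl

theorem card_offDiag_nsmul_sum_apply_apply [AddCommMonoid M] (f : α → α → M) {a b : α}
    (hab : a ≠ b) :
    #(univ : Finset α).offDiag • ∑ σ : Perm α, f (σ a) (σ b) =
      (Fintype.card α).factorial • ∑ p ∈ univ.offDiag, f p.1 p.2 := by
  calc #(univ : Finset α).offDiag • ∑ σ : Perm α, f (σ a) (σ b)
      = ∑ p ∈ univ.offDiag, ∑ σ : Perm α, f (σ p.1) (σ p.2) := by
        rw [← sum_const]
        exact sum_congr rfl fun p hp => sum_apply_apply_eq_of_ne f hab (mem_offDiag.mp hp).2.2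
    _ = ∑ σ : Perm α, ∑ p ∈ univ.offDiag, f (σ p.1) (σ p.2) := sum_comm
    _ = ∑ σ : Perm α, ∑ p ∈ univ.offDiag, f p.1 p.2 :=
        sum_congr rfl fun σ _ =>
          sum_equiv (σ.prodCongr σ) (by simp [σ.injective.ne_iff]) fun _ _ => rfl
    _ = (Fintype.card α).factorial • ∑ p ∈ univ.offDiag, f p.1 p.2 := by
        rw [sum_const, card_univ, Fintype.card_perm]

theorem sum_offDiag_div_card_eq_sum_div_factorial [Field M] [CharZero M] (f : α → α → M)
    {a b : α} (hab : a ≠ b) :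
    (∑ p ∈ univ.offDiag, f p.1 p.2) / #(univ : Finset α).offDiag =
      (∑ σ : Perm α, f (σ a) (σ b)) / (Fintype.card α).factorial := by
  have hcard : (#(univ : Finset α).offDiag : M) ≠ 0 := by
    have hpair : (a, b) ∈ (univ : Finset α).offDiag := by simp [hab]
    exact_mod_cast (card_pos.mpr ⟨_, hpair⟩).ne'
  have key := card_offDiag_nsmul_sum_apply_apply f hab
  simp only [nsmul_eq_mul] at key
  rw [div_eq_div_iff hcard (Nat.cast_ne_zero.mpr (Nat.factorial_ne_zero _))]
  linear_combination key.symm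

end Equiv.Perm

/-- Hoeffding decomposition identity. -/
theorem stmt_12 (n : ℕ) (hn : 2 ≤ n) (H : Fin n → Fin n → ℝ) :
    ((n : ℝ) * ((n : ℝ) - 1))⁻¹ *
        ∑ i : Fin n, ∑ j : Fin n, (if i ≠ j then H i j else 0)
      = ((Nat.factorial n : ℝ))⁻¹ * ∑ σ : Equiv.Perm (Fin n),
          (((n / 2 : ℕ) : ℝ))⁻¹ * ∑ i : Fin (n / 2),
            H (σ ⟨2 * i.1, by have := i.isLt; omega⟩)
              (σ ⟨2 * i.1 + 1, by have := i.isLt; omega⟩) := by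
  have hab : (⟨0, by omega⟩ : Fin n) ≠ ⟨1, by omega⟩ := by simp
  have hcard : (#(univ : Finset (Fin n)).offDiag : ℝ) = n * (n - 1) := by
    rw [offDiag_card, card_univ, Fintype.card_fin, Nat.cast_sub (Nat.le_mul_self n)]
    push_cast
    ring
  have hm : ((n / 2 : ℕ) : ℝ) ≠ 0 := by exact_mod_cast (by omega : n / 2 ≠ 0)
  have hrhs : ∑ σ : Equiv.Perm (Fin n), ((n / 2 : ℕ) : ℝ)⁻¹ * ∑ i : Fin (n / 2),
      H (σ ⟨2 * i.1, by omega⟩) (σ ⟨2 * i.1 + 1, by omega⟩) =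
        ∑ σ : Equiv.Perm (Fin n), H (σ ⟨0, by omega⟩) (σ ⟨1, by omega⟩) := by
    rw [← mul_sum, sum_comm,
      sum_congr rfl fun i _ => Equiv.Perm.sum_apply_apply_eq_of_ne H (by simp) hab,
      sum_const, card_univ, Fintype.card_fin, nsmul_eq_mul, inv_mul_cancel_left₀ hm]
  rw [hrhs, ← sum_offDiag_eq_sum_sum_ite, ← hcard, inv_mul_eq_div,
    Equiv.Perm.sum_offDiag_div_card_eq_sum_div_factorial H hab, Fintype.card_fin, inv_mul_eq_div]
end

section
/- Decoupling bound for U-statistics of i.i.d. variables: let (X_i)_{i=1..n} be i.i.d. random variables with values in a measurable space, let h ≥ 0 be a symmetric measurable function of two variables, and set W_n = (1/(n(n-1))) Σ_{i≠j} h(X_i, X_j). Then for every δ > 0 and C > 0, P[W_n > δ] ≤ e^{-Cδ} · E[ exp( (C/⌊n/2⌋) h(X₁, X₂) ) ]^{⌊n/2⌋}. -/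
open MeasureTheory ProbabilityTheory
open scoped ENNReal
open Finset

/-! Hoeffding's decoupling. Averaged over all permutations `σ` of `Fin n`, the U-statistic `W`
equals the average of the block means `(1/m) ∑_{i<m} h(X_{σ(2i)}, X_{σ(2i+1)})`, `m = ⌊n/2⌋`.
Within one block the pairs of indices are disjoint, so its summands are i.i.d. After Markov's
inequality for `exp (C W)`, Jensen's inequality for the average over `σ` and independence within
each block give `E[exp (C W)] ≤ E[exp ((C/m) h(X₀, X₁))]^m`. -/

theorem exists_perm_apply_eq_and_apply_eq {α : Type*} {a b c d : α} (hab : a ≠ b)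
    (hcd : c ≠ d) : ∃ σ : Equiv.Perm α, σ a = c ∧ σ b = d := by
  classical
  -- `swap a c` sends `a` to `c`; the second swap then moves the image of `b` to `d`, fixing `c`.
  refine ⟨Equiv.swap (Equiv.swap a c b) d * Equiv.swap a c, ?_, by simp⟩
  have hbc : Equiv.swap a c b ≠ c := by
    rw [Ne, Equiv.swap_apply_eq_iff, Equiv.swap_apply_right]
    exact hab.symm
  simp [Equiv.swap_apply_of_ne_of_ne hbc.symm hcd]

section Combinatorics

variable {α M : Type*} [Fintype α] [AddCommMonoid M]

theorem sum_range_offDiag (n : ℕ) (f : ℕ → ℕ → M) :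
    ∑ i ∈ range n, ∑ j ∈ range n, (if i ≠ j then f i j else 0)
      = ∑ x ∈ (univ : Finset (Fin n)).offDiag, f x.1 x.2 := by
  have hoff : (univ : Finset (Fin n)).offDiag = (univ ×ˢ univ).filter fun x => x.1 ≠ x.2 := by
    ext; simp
  rw [hoff, sum_filter, sum_product, ← Fin.sum_univ_eq_sum_range]
  refine sum_congr rfl fun i _ => ?_
  rw [← Fin.sum_univ_eq_sum_range]
  simp only [ne_eq, Fin.val_inj]

theorem sum_offDiag_perm_apply (g : α → α → M) (σ : Equiv.Perm α) :
    ∑ x ∈ univ.offDiag, g (σ x.1) (σ x.2) = ∑ x ∈ univ.offDiag, g x.1 x.2 :=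
  sum_equiv (σ.prodCongr σ) (by simp) fun _ _ => rfl

variable [DecidableEq α]

theorem sum_perm_apply_apply_eq (g : α → α → M) {u v u' v' : α} (huv : u ≠ v)
    (hu'v' : u' ≠ v') :
    ∑ σ : Equiv.Perm α, g (σ u) (σ v) = ∑ σ : Equiv.Perm α, g (σ u') (σ v') := by
  obtain ⟨π, rfl, rfl⟩ := exists_perm_apply_eq_and_apply_eq hu'v' huv
  exact Fintype.sum_equiv (Equiv.mulRight π) _ _ fun σ => rfl

theorem card_offDiag_nsmul_sum_perm (g : α → α → M) {u v : α} (huv : u ≠ v) :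
    #(univ : Finset α).offDiag • ∑ σ : Equiv.Perm α, g (σ u) (σ v)
      = Fintype.card (Equiv.Perm α) • ∑ x ∈ univ.offDiag, g x.1 x.2 := by
  calc #(univ : Finset α).offDiag • ∑ σ : Equiv.Perm α, g (σ u) (σ v)
      = ∑ x ∈ univ.offDiag, ∑ σ : Equiv.Perm α, g (σ x.1) (σ x.2) := by
        rw [← sum_const]
        exact sum_congr rfl fun x hx => sum_perm_apply_apply_eq g huv (mem_offDiag.1 hx).2.2
    _ = ∑ σ : Equiv.Perm α, ∑ x ∈ univ.offDiag, g x.1 x.2 := by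
        rw [sum_comm]
        exact sum_congr rfl fun σ _ => sum_offDiag_perm_apply g σ
    _ = Fintype.card (Equiv.Perm α) • ∑ x ∈ univ.offDiag, g x.1 x.2 := by
        rw [sum_const, card_univ]

/-- Hoeffding's decomposition of a U-statistic of order two. -/
theorem offDiag_average_eq_perm_average {ι : Type*} (g : α → α → ℝ) {s : Finset ι}
    (hs : s.Nonempty) {u v : ι → α} (huv : ∀ i ∈ s, u i ≠ v i) :
    (#(univ : Finset α).offDiag : ℝ)⁻¹ * ∑ x ∈ univ.offDiag, g x.1 x.2
      = (Fintype.card (Equiv.Perm α) : ℝ)⁻¹ *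
          ∑ σ : Equiv.Perm α, (#s : ℝ)⁻¹ * ∑ i ∈ s, g (σ (u i)) (σ (v i)) := by
  obtain ⟨i₀, hi₀⟩ := hs
  have hD : (#(univ : Finset α).offDiag : ℝ) ≠ 0 := by
    exact_mod_cast (card_pos.2 ⟨(u i₀, v i₀), by simpa using huv i₀ hi₀⟩).ne'
  have hK : (Fintype.card (Equiv.Perm α) : ℝ) ≠ 0 := by exact_mod_cast Fintype.card_ne_zero
  have hs : (#s : ℝ) ≠ 0 := by exact_mod_cast (card_pos.2 ⟨i₀, hi₀⟩).ne'
  have hpair : ∀ i ∈ s, ∑ σ : Equiv.Perm α, g (σ (u i)) (σ (v i))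
      = (#(univ : Finset α).offDiag : ℝ)⁻¹ * Fintype.card (Equiv.Perm α)
          * ∑ x ∈ univ.offDiag, g x.1 x.2 := by
    intro i hi
    have hcount := card_offDiag_nsmul_sum_perm g (huv i hi)
    rw [nsmul_eq_mul, nsmul_eq_mul] at hcount
    rw [mul_assoc, ← hcount, inv_mul_cancel_left₀ hD]
  rw [← mul_sum, sum_comm, sum_congr rfl hpair, sum_const, nsmul_eq_mul]
  field_simp

end Combinatorics

section Independence

variable {Ω ι κ E : Type*} [MeasurableSpace Ω] [MeasurableSpace E] {P : Measure Ω}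
  {X : ι → Ω → E}

theorem map_pair_eq_of_iIndepFun (hX : ∀ i, Measurable (X i)) (hindep : iIndepFun X P)
    (hid : ∀ i j, P.map (X i) = P.map (X j)) {i j i' j' : ι} (hij : i ≠ j) (hij' : i' ≠ j') :
    P.map (fun ω => (X i ω, X j ω)) = P.map (fun ω => (X i' ω, X j' ω)) := by
  have := hindep.isProbabilityMeasure
  rw [(indepFun_iff_map_prod_eq_prod_map_map (hX i).aemeasurable (hX j).aemeasurable).1
      (hindep.indepFun hij),
    (indepFun_iff_map_prod_eq_prod_map_map (hX i').aemeasurable (hX j').aemeasurable).1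
      (hindep.indepFun hij'), hid i i', hid j j']

theorem indepFun_pair_prod_pairs (hX : ∀ i, Measurable (X i)) (hindep : iIndepFun X P)
    {φ : E × E → ℝ≥0∞} (hφ : Measurable φ) {a b : κ → ι}
    (hab : Function.Injective (Sum.elim a b)) {s : Finset κ} {k : κ} (hk : k ∉ s) :
    IndepFun (fun ω => φ (X (a k) ω, X (b k) ω))
      (fun ω => ∏ i ∈ s, φ (X (a i) ω, X (b i) ω)) P := by
  classical
  set S : Finset ι := {a k, b k}
  set T : Finset ι := s.image a ∪ s.image b
  have hST : Disjoint S T := by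
    have hne : ∀ i ∈ s, i ≠ k := fun i hi hik => hk (hik ▸ hi)
    simp only [S, T, disjoint_insert_left, disjoint_singleton_left, mem_union, mem_image, not_or,
      not_exists, not_and]
    refine ⟨⟨fun i hi h => hne i hi ?_, fun i hi h => ?_⟩, fun i hi h => ?_,
      fun i hi h => hne i hi ?_⟩
    · exact Sum.inl_injective (@hab (.inl i) (.inl k) h)
    · exact Sum.inl_ne_inr (@hab (.inl k) (.inr i) h.symm)
    · exact Sum.inl_ne_inr (@hab (.inl i) (.inr k) h)
    · exact Sum.inr_injective (@hab (.inr i) (.inr k) h)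
  have haS : a k ∈ S := by simp [S]
  have hbS : b k ∈ S := by simp [S]
  have haT : ∀ i ∈ s, a i ∈ T := fun i hi => mem_union_left _ (mem_image_of_mem a hi)
  have hbT : ∀ i ∈ s, b i ∈ T := fun i hi => mem_union_right _ (mem_image_of_mem b hi)
  have := (hindep.indepFun_finset S T hST hX).comp
    (φ := fun t => φ (t ⟨a k, haS⟩, t ⟨b k, hbS⟩))
    (ψ := fun t => ∏ i ∈ s.attach, φ (t ⟨a i, haT i i.2⟩, t ⟨b i, hbT i i.2⟩))
    (by fun_prop) (by fun_prop)
  convert this using 2 with ω ω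
  exacts [rfl, (s.prod_attach fun i => φ (X (a i) ω, X (b i) ω)).symm]

theorem lintegral_prod_pairs_of_iIndepFun (hX : ∀ i, Measurable (X i))
    (hindep : iIndepFun X P) {φ : E × E → ℝ≥0∞} (hφ : Measurable φ) {a b : κ → ι}
    (hab : Function.Injective (Sum.elim a b)) (s : Finset κ) :
    ∫⁻ ω, ∏ k ∈ s, φ (X (a k) ω, X (b k) ω) ∂P
      = ∏ k ∈ s, ∫⁻ ω, φ (X (a k) ω, X (b k) ω) ∂P := by
  classical
  induction s using Finset.induction_on with
  | empty => simp [hindep.isProbabilityMeasure]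
  | insert k s hk ih =>
    simp only [prod_insert hk, ← ih]
    exact lintegral_mul_eq_lintegral_mul_lintegral_of_indepFun (by fun_prop)
      (Finset.measurable_prod _ fun i _ => by fun_prop)
      (indepFun_pair_prod_pairs hX hindep hφ hab hk)

theorem lintegral_exp_sum_pairs_of_iIndepFun (hX : ∀ i, Measurable (X i))
    (hindep : iIndepFun X P) (hid : ∀ i j, P.map (X i) = P.map (X j)) {h : E → E → ℝ}
    (hmeas : Measurable fun p : E × E => h p.1 p.2) (c : ℝ) {a b : κ → ι}
    (hab : Function.Injective (Sum.elim a b)) (s : Finset κ) {i j : ι} (hij : i ≠ j) :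
    ∫⁻ ω, ENNReal.ofReal (Real.exp (c * ∑ k ∈ s, h (X (a k) ω) (X (b k) ω))) ∂P
      = (∫⁻ ω, ENNReal.ofReal (Real.exp (c * h (X i ω) (X j ω))) ∂P) ^ #s := by
  set φ : E × E → ℝ≥0∞ := fun p => ENNReal.ofReal (Real.exp (c * h p.1 p.2))
  have hφ : Measurable φ := by fun_prop
  have hpair : ∀ k, ∫⁻ ω, φ (X (a k) ω, X (b k) ω) ∂P = ∫⁻ ω, φ (X i ω, X j ω) ∂P := by
    intro k
    have hk : a k ≠ b k := fun heq => Sum.inl_ne_inr (@hab (.inl k) (.inr k) heq)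
    rw [← lintegral_map hφ (by fun_prop : Measurable fun ω => (X (a k) ω, X (b k) ω)),
      map_pair_eq_of_iIndepFun hX hindep hid hk hij, lintegral_map hφ (by fun_prop)]
  calc ∫⁻ ω, ENNReal.ofReal (Real.exp (c * ∑ k ∈ s, h (X (a k) ω) (X (b k) ω))) ∂P
      = ∫⁻ ω, ∏ k ∈ s, φ (X (a k) ω, X (b k) ω) ∂P := by
        refine lintegral_congr fun ω => ?_
        rw [mul_sum, Real.exp_sum, ENNReal.ofReal_prod_of_nonneg fun _ _ => (Real.exp_pos _).le]
    _ = (∫⁻ ω, φ (X i ω, X j ω) ∂P) ^ #s := by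
        rw [lintegral_prod_pairs_of_iIndepFun hX hindep hφ hab, prod_congr rfl fun k _ => hpair k,
          prod_const]

end Independence

section Chernoff

variable {Ω : Type*} [MeasurableSpace Ω] {μ : Measure Ω}

theorem measure_lt_le_exp_mul_lintegral_exp {f : Ω → ℝ} (hf : Measurable f) {C : ℝ}
    (hC : 0 ≤ C) (δ : ℝ) :
    μ {ω | δ < f ω}
      ≤ ENNReal.ofReal (Real.exp (-C * δ)) * ∫⁻ ω, ENNReal.ofReal (Real.exp (C * f ω)) ∂μ := by
  set ε := ENNReal.ofReal (Real.exp (C * δ))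
  have hsub : {ω | δ < f ω} ⊆ {ω | ε ≤ ENNReal.ofReal (Real.exp (C * f ω))} := fun ω hω =>
    ENNReal.ofReal_le_ofReal (Real.exp_le_exp.2 (mul_le_mul_of_nonneg_left (le_of_lt hω) hC))
  have hε : ε⁻¹ = ENNReal.ofReal (Real.exp (-C * δ)) := by
    rw [← ENNReal.ofReal_inv_of_pos (Real.exp_pos _), ← Real.exp_neg, neg_mul]
  calc μ {ω | δ < f ω} ≤ (∫⁻ ω, ENNReal.ofReal (Real.exp (C * f ω)) ∂μ) / ε :=
        (measure_mono hsub).trans (meas_ge_le_lintegral_div (by fun_prop)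
          (ENNReal.ofReal_pos.2 (Real.exp_pos _)).ne' ENNReal.ofReal_ne_top)
    _ = _ := by rw [ENNReal.div_eq_inv_mul, hε]

theorem lintegral_exp_average_le {ι : Type*} [Fintype ι] [Nonempty ι] {f : ι → Ω → ℝ}
    (hf : ∀ i, Measurable (f i)) {r : ℝ≥0∞}
    (hr : ∀ i, ∫⁻ ω, ENNReal.ofReal (Real.exp (f i ω)) ∂μ ≤ r) :
    ∫⁻ ω, ENNReal.ofReal (Real.exp ((Fintype.card ι : ℝ)⁻¹ * ∑ i, f i ω)) ∂μ ≤ r := by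
  set K := Fintype.card ι
  have hK : (0 : ℝ) < K := by exact_mod_cast Fintype.card_pos
  have hjensen : ∀ ω, (K : ℝ≥0∞) * ENNReal.ofReal (Real.exp ((K : ℝ)⁻¹ * ∑ i, f i ω))
      ≤ ∑ i, ENNReal.ofReal (Real.exp (f i ω)) := by
    intro ω
    have := convexOn_exp.map_sum_le (t := univ) (w := fun _ => (K : ℝ)⁻¹) (p := fun i => f i ω)
      (fun _ _ => by positivity) (by simp [K, hK.ne']) (fun _ _ => Set.mem_univ _)
    simp only [smul_eq_mul, ← mul_sum] at this
    rw [← ENNReal.ofReal_natCast, ← ENNReal.ofReal_mul hK.le,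
      ← ENNReal.ofReal_sum_of_nonneg fun _ _ => (Real.exp_pos _).le]
    exact ENNReal.ofReal_le_ofReal ((le_inv_mul_iff₀ hK).1 this)
  refine (ENNReal.mul_le_mul_iff_right (a := (K : ℝ≥0∞)) (by simp [K]) (by simp)).1 ?_
  calc (K : ℝ≥0∞) * ∫⁻ ω, ENNReal.ofReal (Real.exp ((K : ℝ)⁻¹ * ∑ i, f i ω)) ∂μ
      ≤ ∫⁻ ω, ∑ i, ENNReal.ofReal (Real.exp (f i ω)) ∂μ := by
        rw [← lintegral_const_mul' _ _ (by simp)]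
        exact lintegral_mono hjensen
    _ = ∑ i, ∫⁻ ω, ENNReal.ofReal (Real.exp (f i ω)) ∂μ :=
        lintegral_finsetSum _ fun i _ => by fun_prop
    _ ≤ ∑ _i : ι, r := sum_le_sum fun i _ => hr i
    _ = K * r := by rw [sum_const, card_univ, nsmul_eq_mul]

end Chernoff

/-- The `i`-th block consists of the positions `2i` and `2i + 1`; for odd `n` the last position
belongs to no block. -/
def blockFst (n : ℕ) (i : Fin (n / 2)) : Fin n := ⟨2 * i, by omega⟩

def blockSnd (n : ℕ) (i : Fin (n / 2)) : Fin n := ⟨2 * i + 1, by omega⟩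

theorem injective_sumElim_blockFst_blockSnd (n : ℕ) :
    Function.Injective (Sum.elim (blockFst n) (blockSnd n)) := by
  rintro (i | i) (j | j) hij <;> simp [blockFst, blockSnd, Fin.ext_iff] at hij ⊢ <;> omega

theorem injective_sumElim_perm_blocks {n : ℕ} (σ : Equiv.Perm (Fin n)) :
    Function.Injective
      (Sum.elim (fun i => (σ (blockFst n i) : ℕ)) fun i => (σ (blockSnd n i) : ℕ)) :=
  Sum.comp_elim Fin.val _ _ ▸ Sum.comp_elim σ _ _ ▸
    Fin.val_injective.comp (σ.injective.comp (injective_sumElim_blockFst_blockSnd n))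

theorem blockFst_ne_blockSnd (n : ℕ) (i : Fin (n / 2)) : blockFst n i ≠ blockSnd n i := by
  simp [blockFst, blockSnd, Fin.ext_iff]

theorem uStat_eq_perm_average_of_blocks {n : ℕ} (hn : 2 ≤ n) (g : ℕ → ℕ → ℝ) :
    ((n : ℝ) * ((n : ℝ) - 1))⁻¹ * ∑ i ∈ range n, ∑ j ∈ range n, (if i ≠ j then g i j else 0)
      = (Fintype.card (Equiv.Perm (Fin n)) : ℝ)⁻¹ * ∑ σ : Equiv.Perm (Fin n),
          ((n / 2 : ℕ) : ℝ)⁻¹ * ∑ i : Fin (n / 2), g (σ (blockFst n i)) (σ (blockSnd n i)) := by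
  have := offDiag_average_eq_perm_average (fun p q : Fin n => g p q)
    (s := (univ : Finset (Fin (n / 2)))) ⟨⟨0, Nat.div_pos hn two_pos⟩, mem_univ _⟩
    (u := blockFst n) (v := blockSnd n) fun i _ => blockFst_ne_blockSnd n i
  rw [offDiag_card, card_univ, Fintype.card_fin, card_univ, Fintype.card_fin,
    Nat.cast_sub (Nat.le_mul_self n), Nat.cast_mul] at this
  rw [sum_range_offDiag, ← this]
  ring

theorem stmt_13_general {Ω E : Type*} [MeasurableSpace Ω] [MeasurableSpace E]
    (P : Measure Ω)
    (X : ℕ → Ω → E) (hXmeas : ∀ i, Measurable (X i))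
    (hindep : iIndepFun X P)
    (hid : ∀ i j, Measure.map (X i) P = Measure.map (X j) P)
    (h : E → E → ℝ) (hmeas : Measurable fun p : E × E => h p.1 p.2)
    (n : ℕ) (hn : 2 ≤ n) (δ C : ℝ) (hC : 0 < C) :
    P {ω | δ < ((n : ℝ) * ((n : ℝ) - 1))⁻¹ *
        ∑ i ∈ Finset.range n, ∑ j ∈ Finset.range n,
          (if i ≠ j then h (X i ω) (X j ω) else 0)}
      ≤ ENNReal.ofReal (Real.exp (-C * δ)) *
        (∫⁻ ω, ENNReal.ofReal
            (Real.exp (C / ((n / 2 : ℕ) : ℝ) * h (X 0 ω) (X 1 ω))) ∂P) ^ (n / 2 : ℕ) := by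
  simp only [uStat_eq_perm_average_of_blocks hn fun i j => h (X i _) (X j _)]
  set m := n / 2
  set U : Equiv.Perm (Fin n) → Ω → ℝ := fun σ ω =>
    (m : ℝ)⁻¹ * ∑ i : Fin m, h (X (σ (blockFst n i)) ω) (X (σ (blockSnd n i)) ω)
  have hblock : ∀ σ, ∫⁻ ω, ENNReal.ofReal (Real.exp (C * U σ ω)) ∂P
      = (∫⁻ ω, ENNReal.ofReal (Real.exp (C / m * h (X 0 ω) (X 1 ω))) ∂P) ^ m := by
    intro σ
    simp only [U, ← mul_assoc, ← div_eq_mul_inv]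
    simpa using lintegral_exp_sum_pairs_of_iIndepFun hXmeas hindep hid hmeas (C / m)
      (injective_sumElim_perm_blocks σ) univ zero_ne_one
  refine (measure_lt_le_exp_mul_lintegral_exp (by fun_prop) hC.le δ).trans ?_
  gcongr
  refine le_trans (le_of_eq (lintegral_congr fun ω => ?_))
    (lintegral_exp_average_le (f := fun σ ω => C * U σ ω) (by fun_prop) fun σ => (hblock σ).le)
  rw [mul_left_comm, mul_sum]

/-- **Decoupling bound for U-statistics of i.i.d. variables.** For i.i.d. `(X_i)`, a
nonnegative symmetric measurable kernel `h`, and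
`W_n = (1/(n(n-1))) ∑_{i≠j} h(X_i, X_j)`, one has for all `δ, C > 0`:
`P[W_n > δ] ≤ e^{-Cδ} E[exp((C/⌊n/2⌋) h(X₁,X₂))]^{⌊n/2⌋}`. -/
theorem stmt_13 {Ω E : Type*} [MeasurableSpace Ω] [MeasurableSpace E]
    (P : Measure Ω) [IsProbabilityMeasure P]
    (X : ℕ → Ω → E) (hXmeas : ∀ i, Measurable (X i))
    (hindep : iIndepFun X P)
    (hid : ∀ i j, Measure.map (X i) P = Measure.map (X j) P)
    (h : E → E → ℝ) (hmeas : Measurable fun p : E × E => h p.1 p.2)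
    (hnonneg : ∀ x y, 0 ≤ h x y) (hsymm : ∀ x y, h x y = h y x)
    (n : ℕ) (hn : 2 ≤ n) (δ C : ℝ) (hδ : 0 < δ) (hC : 0 < C) :
    P {ω | δ < ((n : ℝ) * ((n : ℝ) - 1))⁻¹ *
        ∑ i ∈ Finset.range n, ∑ j ∈ Finset.range n,
          (if i ≠ j then h (X i ω) (X j ω) else 0)}
      ≤ ENNReal.ofReal (Real.exp (-C * δ)) *
        (∫⁻ ω, ENNReal.ofReal
            (Real.exp (C / ((n / 2 : ℕ) : ℝ) * h (X 0 ω) (X 1 ω))) ∂P) ^ (n / 2 : ℕ) :=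
  stmt_13_general P X hXmeas hindep hid h hmeas n hn δ C hC
end

section
/- Exponential tightness is preserved under exponential tilting: let E be a regular Hausdorff space, (μ_n) exponentially tight probability measures on E, φ : E → ℝ measurable with limsup_n (1/n) log ∫ e^{nγφ} dμ_n < ∞ for some γ > 1, and limsup_n -(1/n) log Z_n < ∞ where Z_n = ∫ e^{nφ} dμ_n. Then the tilted measures ν_n = Z_n⁻¹ e^{nφ} μ_n are exponentially tight: for every M > 0 there exists a compact set K with limsup_n (1/n) log ν_n(K^c) < -M. -/
open MeasureTheory Filter
open scoped ENNReal

/-!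
Write `ν_n(s) = Z_n⁻¹ ∫_s e^{nφ} dμ_n`. Hölder's inequality with exponents `γ` and its conjugate
bounds the integral by `μ_n(s)^{1 - 1/γ} (∫ e^{nγφ} dμ_n)^{1/γ}`. On the exponential scale the
three factors contribute rates at most `A`, `-(1 - 1/γ) M'` and `B/γ`, where `A` and `B` bound the
given limsups and `K` is taken from the exponential tightness of `μ_n` at level `M'`. Choosing `M'`
large makes the total rate smaller than `-M`.
-/

theorem EReal.coe_inv_mul_log_le_iff {t : ℝ} (ht : 0 < t) {x : ℝ≥0∞} {c : ℝ} :
    ((t⁻¹ : ℝ) : EReal) * ENNReal.log x ≤ c ↔ x ≤ ENNReal.ofReal (Real.exp (t * c)) := by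
  rw [← ENNReal.log_le_log_iff, ENNReal.log_ofReal_of_pos (Real.exp_pos _), Real.log_exp,
    EReal.coe_inv, ← EReal.div_eq_inv_mul, EReal.div_le_iff_le_mul (by exact_mod_cast ht)
      (EReal.coe_ne_top t), EReal.coe_mul]

theorem eventually_le_exp_of_limsup_lt {x : ℕ → ℝ≥0∞} {c : ℝ}
    (h : limsup (fun n : ℕ => (((n : ℝ)⁻¹ : ℝ) : EReal) * ENNReal.log (x n)) atTop < c) :
    ∀ᶠ n : ℕ in atTop, x n ≤ ENNReal.ofReal (Real.exp (n * c)) := by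
  filter_upwards [eventually_lt_of_limsup_lt h, eventually_gt_atTop 0] with n hn hn0
  exact (EReal.coe_inv_mul_log_le_iff (by positivity)).1 hn.le

theorem limsup_lt_of_eventually_le_exp {x : ℕ → ℝ≥0∞} {c d : ℝ}
    (h : ∀ᶠ n : ℕ in atTop, x n ≤ ENNReal.ofReal (Real.exp (n * c))) (hcd : c < d) :
    limsup (fun n : ℕ => (((n : ℝ)⁻¹ : ℝ) : EReal) * ENNReal.log (x n)) atTop < d := by
  refine (limsup_le_of_le (by isBoundedDefault) ?_).trans_lt (EReal.coe_lt_coe_iff.2 hcd)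
  filter_upwards [h, eventually_gt_atTop 0] with n hn hn0
  exact (EReal.coe_inv_mul_log_le_iff (by positivity)).2 hn

theorem MeasureTheory.withDensity_apply_le_rpow_mul_lintegral_rpow {α : Type*}
    [MeasurableSpace α] {μ : Measure α} {p q : ℝ} (hpq : p.HolderConjugate q)
    {f : α → ℝ≥0∞} (hf : AEMeasurable f μ) (s : Set α) :
    μ.withDensity f s ≤ μ s ^ (1 / p) * (∫⁻ a, f a ^ q ∂μ) ^ (1 / q) := by
  set t := toMeasurable μ s
  calc μ.withDensity f s ≤ μ.withDensity f t := measure_mono (subset_toMeasurable μ s)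
    _ = ∫⁻ a in t, ((1 : α → ℝ≥0∞) * f) a ∂μ := by
      simp only [withDensity_apply _ (measurableSet_toMeasurable μ s), Pi.mul_apply,
        Pi.one_apply, one_mul, t]
    _ ≤ (∫⁻ a in t, 1 ^ p ∂μ) ^ (1 / p) * (∫⁻ a in t, f a ^ q ∂μ) ^ (1 / q) :=
      ENNReal.lintegral_mul_le_Lp_mul_Lq _ hpq aemeasurable_const hf.restrict
    _ ≤ μ s ^ (1 / p) * (∫⁻ a, f a ^ q ∂μ) ^ (1 / q) := by
      rw [ENNReal.one_rpow, setLIntegral_const, one_mul, measure_toMeasurable]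
      gcongr
      · exact hpq.symm.one_div_nonneg
      · exact Measure.restrict_le_self

theorem ENNReal.ofReal_exp_mul_rpow_mul_rpow (a b c p q : ℝ) :
    ENNReal.ofReal (Real.exp a) * (ENNReal.ofReal (Real.exp b) ^ p *
      ENNReal.ofReal (Real.exp c) ^ q) = ENNReal.ofReal (Real.exp (a + p * b + q * c)) := by
  rw [ENNReal.ofReal_rpow_of_pos (Real.exp_pos _), ENNReal.ofReal_rpow_of_pos (Real.exp_pos _),
    ← Real.exp_mul, ← Real.exp_mul, ← ENNReal.ofReal_mul (Real.exp_pos _).le,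
    ← ENNReal.ofReal_mul (Real.exp_pos _).le, ← Real.exp_add, ← Real.exp_add]
  ring_nf

theorem MeasureTheory.withDensity_ofReal_exp_apply_le {α : Type*} [MeasurableSpace α]
    (μ : Measure α) {φ : α → ℝ} (hφ : Measurable φ) (t : ℝ) {γ : ℝ} (hγ : 1 < γ) (s : Set α) :
    μ.withDensity (fun x ↦ ENNReal.ofReal (Real.exp (t * φ x))) s ≤
      μ s ^ (1 - γ⁻¹) * (∫⁻ x, ENNReal.ofReal (Real.exp (t * γ * φ x)) ∂μ) ^ γ⁻¹ := by
  have hγ' := (Real.HolderConjugate.conjExponent hγ).symm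
  have hpow (x : α) : ENNReal.ofReal (Real.exp (t * φ x)) ^ γ =
      ENNReal.ofReal (Real.exp (t * γ * φ x)) := by
    rw [ENNReal.ofReal_rpow_of_pos (Real.exp_pos _), ← Real.exp_mul]
    ring_nf
  simpa only [one_div, hγ'.symm.one_sub_inv, hpow] using
    withDensity_apply_le_rpow_mul_lintegral_rpow hγ'
      (hφ.const_mul t).exp.ennreal_ofReal.aemeasurable s

theorem stmt_15_general {E : Type*} [TopologicalSpace E] [MeasurableSpace E] (μ : ℕ → Measure E)
    (htight : ∀ M : ℝ, 0 < M → ∃ K : Set E, IsCompact K ∧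
      limsup (fun n : ℕ => (((n : ℝ)⁻¹ : ℝ) : EReal) * ENNReal.log (μ n Kᶜ)) atTop
        < ((-M : ℝ) : EReal))
    (φ : E → ℝ) (hφ : Measurable φ) (γ : ℝ) (hγ : 1 < γ)
    (hint : limsup (fun n : ℕ => (((n : ℝ)⁻¹ : ℝ) : EReal) *
        ENNReal.log (∫⁻ x, ENNReal.ofReal (Real.exp ((n : ℝ) * γ * φ x)) ∂(μ n))) atTop < ⊤)
    (hZ : limsup (fun n : ℕ => -((((n : ℝ)⁻¹ : ℝ) : EReal) *
        ENNReal.log (∫⁻ x, ENNReal.ofReal (Real.exp ((n : ℝ) * φ x)) ∂(μ n)))) atTop < ⊤) :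
    let Z : ℕ → ℝ≥0∞ := fun n => ∫⁻ x, ENNReal.ofReal (Real.exp ((n : ℝ) * φ x)) ∂(μ n)
    let ν : ℕ → Measure E := fun n =>
      (Z n)⁻¹ • (μ n).withDensity fun x => ENNReal.ofReal (Real.exp ((n : ℝ) * φ x))
    ∀ M : ℝ, 0 < M → ∃ K : Set E, IsCompact K ∧
      limsup (fun n : ℕ => (((n : ℝ)⁻¹ : ℝ) : EReal) * ENNReal.log (ν n Kᶜ)) atTop
        < ((-M : ℝ) : EReal) := by
  intro Z ν M _
  obtain ⟨A, hA, -⟩ := EReal.exists_between_coe_real hZ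
  obtain ⟨B, hB, -⟩ := EReal.exists_between_coe_real hint
  have hδ : 0 < 1 - γ⁻¹ := sub_pos.2 (inv_lt_one_of_one_lt₀ hγ)
  obtain ⟨M', hM'0, hM'⟩ := exists_pos_lt_mul hδ (A + γ⁻¹ * B + M)
  obtain ⟨K, hK, hKrate⟩ := htight M' hM'0
  refine ⟨K, hK, limsup_lt_of_eventually_le_exp (c := A + (1 - γ⁻¹) * -M' + γ⁻¹ * B) ?_
    (by linarith)⟩
  have hZinv : ∀ᶠ n : ℕ in atTop, (Z n)⁻¹ ≤ ENNReal.ofReal (Real.exp (n * A)) :=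
    eventually_le_exp_of_limsup_lt (by simpa only [ENNReal.log_inv, mul_neg] using hA)
  filter_upwards [hZinv, eventually_le_exp_of_limsup_lt hB,
    eventually_le_exp_of_limsup_lt hKrate] with n hZn hIn hKn
  calc ν n Kᶜ = (Z n)⁻¹ * (μ n).withDensity (fun x ↦ ENNReal.ofReal (Real.exp (n * φ x))) Kᶜ :=
        rfl
    _ ≤ (Z n)⁻¹ * (μ n Kᶜ ^ (1 - γ⁻¹) *
          (∫⁻ x, ENNReal.ofReal (Real.exp (n * γ * φ x)) ∂(μ n)) ^ γ⁻¹) := by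
      gcongr
      exact withDensity_ofReal_exp_apply_le (μ n) hφ n hγ Kᶜ
    _ ≤ ENNReal.ofReal (Real.exp (n * A)) * (ENNReal.ofReal (Real.exp (n * -M')) ^ (1 - γ⁻¹) *
          ENNReal.ofReal (Real.exp (n * B)) ^ γ⁻¹) := by
      gcongr
    _ = ENNReal.ofReal (Real.exp (n * (A + (1 - γ⁻¹) * -M' + γ⁻¹ * B))) := by
      rw [ENNReal.ofReal_exp_mul_rpow_mul_rpow]
      ring_nf

/-- **Exponential tightness is preserved under exponential tilting.** On a regular Hausdorff
space, if `(μ_n)` is exponentially tight, `φ` is measurable with an exponential moment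
condition for some `γ > 1`, and `limsup -(1/n) log Z_n < ∞`, then the tilted measures
`ν_n = Z_n⁻¹ e^{nφ} μ_n` are exponentially tight. -/
theorem stmt_15 {E : Type*} [TopologicalSpace E] [T2Space E] [RegularSpace E]
    [MeasurableSpace E] [BorelSpace E]
    (μ : ℕ → Measure E) (hprob : ∀ n, IsProbabilityMeasure (μ n))
    (htight : ∀ M : ℝ, 0 < M → ∃ K : Set E, IsCompact K ∧
      limsup (fun n : ℕ => (((n : ℝ)⁻¹ : ℝ) : EReal) * ENNReal.log (μ n Kᶜ)) atTop
        < ((-M : ℝ) : EReal))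
    (φ : E → ℝ) (hφ : Measurable φ) (γ : ℝ) (hγ : 1 < γ)
    (hint : limsup (fun n : ℕ => (((n : ℝ)⁻¹ : ℝ) : EReal) *
        ENNReal.log (∫⁻ x, ENNReal.ofReal (Real.exp ((n : ℝ) * γ * φ x)) ∂(μ n))) atTop < ⊤)
    (hZ : limsup (fun n : ℕ => -((((n : ℝ)⁻¹ : ℝ) : EReal) *
        ENNReal.log (∫⁻ x, ENNReal.ofReal (Real.exp ((n : ℝ) * φ x)) ∂(μ n)))) atTop < ⊤) :
    let Z : ℕ → ℝ≥0∞ := fun n => ∫⁻ x, ENNReal.ofReal (Real.exp ((n : ℝ) * φ x)) ∂(μ n)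
    let ν : ℕ → Measure E := fun n =>
      (Z n)⁻¹ • (μ n).withDensity fun x => ENNReal.ofReal (Real.exp ((n : ℝ) * φ x))
    ∀ M : ℝ, 0 < M → ∃ K : Set E, IsCompact K ∧
      limsup (fun n : ℕ => (((n : ℝ)⁻¹ : ℝ) : EReal) * ENNReal.log (ν n Kᶜ)) atTop
        < ((-M : ℝ) : EReal) :=
  stmt_15_general μ htight φ hφ γ hγ hint hZ
end
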